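/- arXiv:1502.06711 — 2 statements merged into one kernel-verified Lean document; each statement's English description precedes it below -/
import Mathlib

section
/- Let β > 0 and α = β/9. Then for μ = 3/β² the cubic p_μ(λ) = αλ³ + λ² + βμλ + μ satisfies the identity p_μ(λ) = (β/9)(λ + 3/β)³ for all λ, so λ = −3/β (which equals −1/(3α)) is a real root of algebraic multiplicity three; and for every μ > 0 with μ ≠ 3/β², the cubic p_μ has exactly one real root and a pair of nonreal complex conjugate roots. -/
open Polynomial

/-! A real cubic `P` with `P.a ≠ 0` splits over `ℂ` and its roots are stable under conjugation;
if all three were real, `discr P = (a² ∏ (rᵢ - rⱼ))²` would be nonnegative. So a negative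
discriminant forces a nonreal root `z`, hence the root pattern `{x, z, z̄}`. For
`α = β/9` the discriminant of `αλ³ + λ² + βμλ + μ` is `-(4μ/9)(β²μ - 3)²`, which is negative
exactly when `μ ≠ 3/β²`. -/

namespace Complex

theorem exists_eq_ofReal_conj_of_card_eq_three {s : Multiset ℂ} (hs : Multiset.card s = 3)
    (hconj : s.map (starRingEnd ℂ) = s) {z : ℂ} (hz : z ∈ s) (hzi : z.im ≠ 0) :
    ∃ x : ℝ, s = {(x : ℂ), z, star z} := by
  obtain ⟨t, rfl⟩ := Multiset.exists_cons_of_mem hz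
  have hz_ne : starRingEnd ℂ z ≠ z := fun h => hzi (conj_eq_iff_im.mp h)
  have hmem : starRingEnd ℂ z ∈ t := by
    have : starRingEnd ℂ z ∈ (z ::ₘ t).map (starRingEnd ℂ) :=
      Multiset.mem_map_of_mem _ (Multiset.mem_cons_self z t)
    rw [hconj, Multiset.mem_cons] at this
    exact this.resolve_left hz_ne
  obtain ⟨u, rfl⟩ := Multiset.exists_cons_of_mem hmem
  obtain ⟨w, rfl⟩ : ∃ w, u = {w} := Multiset.card_eq_one.mp (by simpa using hs)
  have hw : starRingEnd ℂ w = w := by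
    simpa [Multiset.cons_swap, Multiset.cons_inj_right] using hconj
  refine ⟨w.re, ?_⟩
  rw [conj_eq_iff_re.mp hw, ← Multiset.cons_zero, Multiset.cons_swap _ w, Multiset.cons_swap z w]
  rfl

end Complex

theorem Polynomial.map_conj_roots_map_ofReal (p : ℝ[X]) :
    (p.map Complex.ofRealHom).roots.map (starRingEnd ℂ) = (p.map Complex.ofRealHom).roots := by
  rw [← (IsAlgClosed.splits (p.map Complex.ofRealHom)).roots_map, Polynomial.map_map]
  congr 2
  exact RingHom.ext Complex.conj_ofReal

namespace Cubic

theorem exists_roots_eq_ofReal_conj_of_discr_neg {P : Cubic ℝ} (ha : P.a ≠ 0)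
    (hd : P.discr < 0) :
    ∃ (x : ℝ) (z : ℂ), z.im ≠ 0 ∧ (P.map Complex.ofRealHom).roots = {(x : ℂ), z, star z} := by
  obtain ⟨r₁, r₂, r₃, h3⟩ := (splits_iff_roots_eq_three ha).mp
    (IsAlgClosed.splits (P.toPoly.map Complex.ofRealHom))
  obtain ⟨z, hz, hzi⟩ : ∃ z ∈ (P.map Complex.ofRealHom).roots, z.im ≠ 0 := by
    by_contra! hreal
    have hre : ∀ r ∈ (P.map Complex.ofRealHom).roots, (r.re : ℂ) = r :=
      fun r hr => Complex.conj_eq_iff_re.mp (Complex.conj_eq_iff_im.mpr (hreal r hr))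
    have h3re := h3
    rw [← hre r₁ (by simp [h3]), ← hre r₂ (by simp [h3]), ← hre r₃ (by simp [h3])] at h3re
    have hsq := discr_eq_prod_three_roots ha h3re
    simp only [Complex.ofRealHom_eq_coe] at hsq
    norm_cast at hsq
    exact hd.not_ge (hsq ▸ sq_nonneg _)
  have hcard : Multiset.card (P.map Complex.ofRealHom).roots = 3 := by rw [h3]; rfl
  have hconj : (P.map Complex.ofRealHom).roots.map (starRingEnd ℂ) =
      (P.map Complex.ofRealHom).roots := by
    rw [map_roots]
    exact P.toPoly.map_conj_roots_map_ofReal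
  obtain ⟨x, hx⟩ := Complex.exists_eq_ofReal_conj_of_card_eq_three hcard hconj hz hzi
  exact ⟨x, z, hzi, hx⟩

theorem discr_mk_div_nine (β μ : ℝ) :
    (⟨β / 9, 1, β * μ, μ⟩ : Cubic ℝ).discr = -(4 * μ / 9) * (β ^ 2 * μ - 3) ^ 2 := by
  simp only [discr]
  ring

end Cubic

theorem cubic_eq_cube {b : ℂ} (hb : b ≠ 0) (l : ℂ) :
    b / 9 * l ^ 3 + l ^ 2 + b * (3 / b ^ 2) * l + 3 / b ^ 2 = b / 9 * (l + 3 / b) ^ 3 := by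
  field_simp
  ring

theorem roots_cubic_eq_cube {b : ℂ} (hb : b ≠ 0) :
    (C (b / 9) * X ^ 3 + X ^ 2 + C (b * (3 / b ^ 2)) * X + C (3 / b ^ 2)).roots =
      {-3 / b, -3 / b, -3 / b} := by
  have hfactor : C (b / 9) * X ^ 3 + X ^ 2 + C (b * (3 / b ^ 2)) * X + C (3 / b ^ 2) =
      C (b / 9) * (X - C (-3 / b)) ^ 3 := by
    refine Polynomial.funext fun l => ?_
    simp only [eval_add, eval_mul, eval_pow, eval_C, eval_X, eval_sub, cubic_eq_cube hb]
    ring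
  rw [hfactor, roots_C_mul _ (by simpa using hb), roots_pow, roots_X_sub_C]
  rfl

/-- Let `β > 0` and `α = β/9`. For `μ = 3/β²` the cubic
`αλ³ + λ² + βμλ + μ` equals `(β/9)(λ + 3/β)³`, so `λ = −3/β = −1/(3α)` is a real root
of algebraic multiplicity three; and for every `μ > 0` with `μ ≠ 3/β²` the cubic has
exactly one real root and a pair of nonreal complex conjugate roots. -/
theorem stmt_4 (β : ℝ) (hβ : 0 < β) (α : ℝ) (hα : α = β / 9) :
    (∀ l : ℂ, (α : ℂ) * l ^ 3 + l ^ 2 + (β : ℂ) * ((3 / β ^ 2 : ℝ) : ℂ) * l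
        + ((3 / β ^ 2 : ℝ) : ℂ) = ((β : ℂ) / 9) * (l + 3 / (β : ℂ)) ^ 3) ∧
    (-3 / β = -1 / (3 * α)) ∧
    (C (α : ℂ) * X ^ 3 + X ^ 2 + C ((β : ℂ) * ((3 / β ^ 2 : ℝ) : ℂ)) * X
        + C ((3 / β ^ 2 : ℝ) : ℂ)).roots =
      {((-3 / β : ℝ) : ℂ), ((-3 / β : ℝ) : ℂ), ((-3 / β : ℝ) : ℂ)} ∧
    (∀ μ : ℝ, 0 < μ → μ ≠ 3 / β ^ 2 →
      ∃ (x : ℝ) (z : ℂ), z.im ≠ 0 ∧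
        (C (α : ℂ) * X ^ 3 + X ^ 2 + C ((β : ℂ) * (μ : ℂ)) * X + C (μ : ℂ)).roots =
          {(x : ℂ), z, star z}) := by
  subst hα
  have hβC : (β : ℂ) ≠ 0 := by exact_mod_cast hβ.ne'
  refine ⟨fun l => ?_, by field_simp; ring, ?_, fun μ hμ hne => ?_⟩
  · push_cast
    exact cubic_eq_cube hβC l
  · push_cast
    exact roots_cubic_eq_cube hβC
  · have hd : (⟨β / 9, 1, β * μ, μ⟩ : Cubic ℝ).discr < 0 := by
      have hμ' : β ^ 2 * μ - 3 ≠ 0 := fun h => hne (by field_simp; linarith)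
      rw [Cubic.discr_mk_div_nine]
      exact mul_neg_of_neg_of_pos (by linarith) (sq_pos_of_ne_zero hμ')
    simpa [Cubic.roots, Cubic.map, Cubic.toPoly] using
      Cubic.exists_roots_eq_ofReal_conj_of_discr_neg (by simpa using hβ.ne') hd
end

section
/- Let α, β be real numbers with 0 < α < β and let μ₁ > 0 be such that all three roots (counted with multiplicity) of the cubic p_{μ₁}(λ) = αλ³ + λ² + βμ₁λ + μ₁ are real. Then for every μ ≥ μ₁, every complex root λ of p_μ satisfies Re(λ) < −1/β. -/
/-!
Write `p_μ(λ) = charCubic α β μ λ = λ²(αλ + 1) + μ(βλ + 1)`: for `λ ≥ -1/β` both terms are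
nonnegative and not both zero, so real roots lie left of `-1/β`. A real root `-s` is a point of the
curve `μ(βs - 1) = s²(1 - αs)`, and along this curve (for `β ≥ 3α`) the quantity
`β³(β - 3α)μ - 2(β - 2α)²` has the sign of `s₀ - s`, where `s₀ = 1/α - 2/β`.
A non-real root `x + iy` of `p_μ` forces the real root `-s` with `s = 1/α + 2x`, since the roots
sum to `-1/α`; so `x ≥ -1/β` means `s ≥ s₀`, and the quantity is `≤ 0` at `μ`.
If all roots of `p_{μ₁}` are real, the quadratic cofactor of a real root `-t` has nonnegative
discriminant, which gives `β > 3α` and `t < s₀`, so the quantity is `> 0` at `μ₁ ≤ μ`: impossible.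
-/

open ComplexConjugate

def charCubic {R : Type*} [CommRing R] (α β μ x : R) : R := α * x ^ 3 + x ^ 2 + β * μ * x + μ

@[simp, norm_cast]
lemma Complex.ofReal_charCubic (α β μ x : ℝ) :
    ((charCubic α β μ x : ℝ) : ℂ) = charCubic (α : ℂ) β μ x := by
  simp [charCubic]

lemma charCubic_conj (α β μ : ℝ) (z : ℂ) :
    charCubic (α : ℂ) β μ (conj z) = conj (charCubic (α : ℂ) β μ z) := by
  simp [charCubic]

lemma charCubic_neg_sub_sub_eq_zero {K : Type*} [Field K] {α β μ z w : K} (hα : α ≠ 0)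
    (hzw : z ≠ w) (hz : charCubic α β μ z = 0) (hw : charCubic α β μ w = 0) :
    charCubic α β μ (-1 / α - z - w) = 0 := by
  -- `p_μ(λ) - α(λ - z)(λ - w)(λ + 1/α + z + w)` is affine in `λ`, so its value at the third
  -- root is the interpolation of its values at `z` and `w`
  have key : charCubic α β μ (-1 / α - z - w) * (z - w) =
      charCubic α β μ z * (-1 / α - z - w - w) - charCubic α β μ w * (-1 / α - z - w - z) := by
    unfold charCubic; field_simp; ring
  rw [hz, hw] at key
  exact (mul_eq_zero.1 (by simpa using key)).resolve_right (sub_ne_zero.2 hzw)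

lemma charCubic_re_root {α β μ : ℝ} (hα : α ≠ 0) {z : ℂ} (hz : charCubic (α : ℂ) β μ z = 0)
    (him : z.im ≠ 0) : charCubic α β μ (-1 / α - 2 * z.re) = 0 := by
  have hzw : z ≠ conj z := fun h => him (Complex.conj_eq_iff_im.1 h.symm)
  have hw : charCubic (α : ℂ) β μ (conj z) = 0 := by rw [charCubic_conj, hz, map_zero]
  have h := charCubic_neg_sub_sub_eq_zero (Complex.ofReal_ne_zero.2 hα) hzw hz hw
  have hthird : -1 / (α : ℂ) - z - conj z = ((-1 / α - 2 * z.re : ℝ) : ℂ) := by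
    rw [sub_sub, Complex.add_conj]; push_cast; ring
  rw [hthird] at h
  exact_mod_cast h

lemma charCubic_mul_eq {R : Type*} [CommRing R] {α β μ t : R} (ht : charCubic α β μ (-t) = 0)
    (x : R) : t * charCubic α β μ x = (x + t) * (α * t * (x * x) + t * (1 - α * t) * x + μ) := by
  unfold charCubic at ht ⊢
  linear_combination (-x) * ht

lemma discrim_nonneg_of_forall_im_eq_zero {a b c : ℝ} (ha : a ≠ 0)
    (h : ∀ z : ℂ, (a : ℂ) * (z * z) + b * z + c = 0 → z.im = 0) : 0 ≤ discrim a b c := by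
  obtain ⟨s, hs⟩ := IsAlgClosed.exists_eq_mul_self (discrim (a : ℂ) b c)
  obtain ⟨z, hz⟩ := exists_quadratic_eq_zero (Complex.ofReal_ne_zero.2 ha) ⟨s, hs⟩
  have hre : ((z.re : ℝ) : ℂ) = z := Complex.ext rfl (h z hz).symm
  rw [← hre] at hz
  have hz' : a * (z.re * z.re) + b * z.re + c = 0 := by exact_mod_cast hz
  rw [discrim_eq_sq_of_quadratic_eq_zero hz']
  positivity

section Real

variable {α β μ : ℝ}

lemma mul_add_one_neg_of_charCubic_eq_zero (hα : 0 < α) (hαβ : α < β) (hμ : 0 < μ) {x : ℝ}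
    (hx : charCubic α β μ x = 0) : β * x + 1 < 0 := by
  by_contra! hβx
  have hsplit : charCubic α β μ x = x ^ 2 * (α * x + 1) + μ * (β * x + 1) := by
    unfold charCubic; ring
  rcases eq_or_ne x 0 with rfl | hx0
  · simp [charCubic] at hx; linarith
  have hαx : 0 < α * x + 1 := by
    rcases hx0.lt_or_gt with hneg | hpos
    · nlinarith
    · positivity
  have hpos : 0 < x ^ 2 * (α * x + 1) + μ * (β * x + 1) :=
    add_pos_of_pos_of_nonneg (mul_pos (by positivity) hαx) (mul_nonneg hμ.le hβx)
  linarith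

lemma exists_charCubic_eq_zero (hα : 0 < α) (hαβ : α ≤ β) (hμ : 0 ≤ μ) :
    ∃ x, charCubic α β μ x = 0 := by
  have hleft : charCubic α β μ (-1 / α) ≤ 0 := by
    have h : charCubic α β μ (-1 / α) = μ * (α - β) / α := by
      unfold charCubic; field_simp; ring
    rw [h]
    exact div_nonpos_of_nonpos_of_nonneg (mul_nonpos_of_nonneg_of_nonpos hμ (by linarith)) hα.le
  have hright : 0 ≤ charCubic α β μ 0 := by simpa [charCubic] using hμ
  obtain ⟨x, -, hx⟩ := intermediate_value_Icc (by rw [neg_div]; linarith [one_div_pos.2 hα])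
    (by unfold charCubic; fun_prop : Continuous (charCubic α β μ)).continuousOn ⟨hleft, hright⟩
  exact ⟨x, hx⟩

lemma charCubic_neg (s : ℝ) : charCubic α β μ (-s) = s ^ 2 * (1 - α * s) - μ * (β * s - 1) := by
  unfold charCubic; ring

lemma threshold_lt_iff_of_charCubic_neg_eq_zero (hα : 0 < α) (h3 : 3 * α ≤ β) {s : ℝ} (hs : 1 < β * s)
    (hroot : charCubic α β μ (-s) = 0) :
    2 * (β - 2 * α) ^ 2 < β ^ 3 * (β - 3 * α) * μ ↔ α * β * s < β - 2 * α := by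
  have hQ : 0 < (β - 3 * α) * (β * s - 1) ^ 2 + (β - α) := by
    nlinarith [mul_nonneg (sub_nonneg.2 h3) (sq_nonneg (β * s - 1))]
  have key : (β * s - 1) * (β ^ 3 * (β - 3 * α) * μ - 2 * (β - 2 * α) ^ 2) =
      (β - 2 * α - α * β * s) * ((β - 3 * α) * (β * s - 1) ^ 2 + (β - α)) := by
    linear_combination -β ^ 3 * (β - 3 * α) * ((charCubic_neg s).symm.trans hroot)
  rw [← sub_pos, ← sub_pos (b := α * β * s), ← mul_pos_iff_of_pos_left (sub_pos.2 hs), key]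
  exact mul_pos_iff_of_pos_right hQ

lemma four_mul_le_of_forall_im_eq_zero (hα : 0 < α)
    (hreal : ∀ z : ℂ, charCubic (α : ℂ) β μ z = 0 → z.im = 0) {t : ℝ} (ht0 : 0 < t)
    (hαt : α * t < 1) (hβt : 1 < β * t) (ht : charCubic α β μ (-t) = 0) :
    4 * (α * t) ≤ (1 - α * t) * (β * t - 1) := by
  have htC : charCubic (α : ℂ) β μ (-(t : ℂ)) = 0 := by exact_mod_cast congrArg Complex.ofReal ht
  have hdisc : 0 ≤ discrim (α * t) (t * (1 - α * t)) μ := by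
    refine discrim_nonneg_of_forall_im_eq_zero (by positivity) fun z hz => hreal z ?_
    have h := charCubic_mul_eq htC z
    push_cast at hz
    rw [hz, mul_zero] at h
    exact (mul_eq_zero.1 h).resolve_left (Complex.ofReal_ne_zero.2 ht0.ne')
  have hcurve : μ * (β * t - 1) = t ^ 2 * (1 - α * t) := by
    linear_combination -(charCubic_neg t).symm.trans ht
  unfold discrim at hdisc
  have hpos : 0 < t ^ 2 * (1 - α * t) := by nlinarith [sq_pos_of_pos ht0]
  nlinarith [mul_nonneg hdisc (sub_pos.2 hβt).le]

lemma exists_neg_root (hα : 0 < α) (hαβ : α < β) (hμ : 0 < μ) :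
    ∃ t, 0 < t ∧ α * t < 1 ∧ 1 < β * t ∧ charCubic α β μ (-t) = 0 := by
  obtain ⟨x, hx⟩ := exists_charCubic_eq_zero hα hαβ.le hμ.le
  rw [← neg_neg x] at hx
  have hβt : 1 < β * -x := by linarith [mul_add_one_neg_of_charCubic_eq_zero hα hαβ hμ hx]
  have ht0 : 0 < -x := pos_of_mul_pos_right (one_pos.trans hβt) (hα.trans hαβ).le
  have hcurve := (charCubic_neg (-x)).symm.trans hx
  refine ⟨-x, ht0, ?_, hβt, hx⟩
  nlinarith [mul_pos hμ (sub_pos.2 hβt), sq_pos_of_pos ht0]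

lemma three_mul_lt_and_lt_of_four_mul_le (hα : 0 < α) {t : ℝ} (ht0 : 0 < t) (hαt : α * t < 1)
    (h : 4 * (α * t) ≤ (1 - α * t) * (β * t - 1)) : 3 * α < β ∧ α * β * t < β - 2 * α := by
  have hαt0 : 0 < α * t := mul_pos hα ht0
  have hβt : 1 < β * t := by nlinarith
  have h4 : 4 * α < β := by nlinarith
  refine ⟨by linarith, ?_⟩
  by_contra! hge
  -- `β (1 - αt) ≤ 2α`, so `4αβt ≤ 2α(βt - 1) < 2αβt`
  nlinarith [mul_le_mul_of_nonneg_right (show β * (1 - α * t) ≤ 2 * α by linarith)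
    (sub_pos.2 hβt).le]

lemma threshold_lt_of_forall_im_eq_zero (hα : 0 < α) (hαβ : α < β) (hμ : 0 < μ)
    (hreal : ∀ z : ℂ, charCubic (α : ℂ) β μ z = 0 → z.im = 0) :
    3 * α < β ∧ 2 * (β - 2 * α) ^ 2 < β ^ 3 * (β - 3 * α) * μ := by
  obtain ⟨t, ht0, hαt, hβt, ht⟩ := exists_neg_root hα hαβ hμ
  obtain ⟨h3, htlt⟩ := three_mul_lt_and_lt_of_four_mul_le hα ht0 hαt
    (four_mul_le_of_forall_im_eq_zero hα hreal ht0 hαt hβt ht)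
  exact ⟨h3, (threshold_lt_iff_of_charCubic_neg_eq_zero hα h3.le hβt ht).2 htlt⟩

lemma le_threshold_of_im_ne_zero (hα : 0 < α) (hαβ : α < β) (h3 : 3 * α ≤ β) (hμ : 0 < μ)
    {z : ℂ} (hz : charCubic (α : ℂ) β μ z = 0) (him : z.im ≠ 0) (hre : -1 ≤ β * z.re) :
    β ^ 3 * (β - 3 * α) * μ ≤ 2 * (β - 2 * α) ^ 2 := by
  set s := 1 / α + 2 * z.re with hs_def
  have hs : charCubic α β μ (-s) = 0 := by
    rw [neg_add', ← neg_div]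
    exact charCubic_re_root hα.ne' hz him
  have hβs : 1 < β * s := by linarith [mul_add_one_neg_of_charCubic_eq_zero hα hαβ hμ hs]
  have hsge : β - 2 * α ≤ α * β * s := by
    have : α * β * s = β + 2 * α * (β * z.re) := by rw [hs_def]; field_simp
    nlinarith
  exact not_lt.1 (mt (threshold_lt_iff_of_charCubic_neg_eq_zero hα h3 hβs hs).1 (not_lt.2 hsge))

end Real

/-- For `0 < α < β`, if `μ₁ > 0` is such that all three (complex) roots
of `αλ³ + λ² + βμ₁λ + μ₁` are real, then for every `μ ≥ μ₁` every complex root `λ` of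
`αλ³ + λ² + βμλ + μ` satisfies `Re(λ) < −1/β`. -/
theorem stmt_13 (α β : ℝ) (hα : 0 < α) (hαβ : α < β)
    (μ₁ : ℝ) (hμ₁ : 0 < μ₁)
    (hreal : ∀ z : ℂ, (α : ℂ) * z ^ 3 + z ^ 2 + (β : ℂ) * (μ₁ : ℂ) * z + (μ₁ : ℂ) = 0 →
      z.im = 0)
    (μ : ℝ) (hμ : μ₁ ≤ μ) (z : ℂ)
    (hroot : (α : ℂ) * z ^ 3 + z ^ 2 + (β : ℂ) * (μ : ℂ) * z + (μ : ℂ) = 0) :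
    z.re < -1 / β := by
  have hμ0 : 0 < μ := hμ₁.trans_le hμ
  obtain ⟨h3, hμ₁_gt⟩ := threshold_lt_of_forall_im_eq_zero hα hαβ hμ₁ hreal
  rw [lt_div_iff₀ (hα.trans hαβ)]
  by_contra! hre
  rcases eq_or_ne z.im 0 with him | him
  · have hzre : ((z.re : ℝ) : ℂ) = z := Complex.ext rfl him.symm
    have hz : charCubic α β μ z.re = 0 := by
      rw [← Complex.ofReal_inj, Complex.ofReal_charCubic, hzre]
      exact hroot
    linarith [mul_add_one_neg_of_charCubic_eq_zero hα hαβ hμ0 hz]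
  · have hμ_le := le_threshold_of_im_ne_zero hα hαβ h3.le hμ0 hroot him (by linarith)
    nlinarith [mul_le_mul_of_nonneg_left hμ (by nlinarith : (0 : ℝ) ≤ β ^ 3 * (β - 3 * α))]
end
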